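/- arXiv:math/0701381 — 2 statements merged into one kernel-verified Lean document; each statement's English description precedes it below -/
import Mathlib

section
/- Burning algorithm: let β ∈ ℕ^{V₀} be given by β_j = e_{j,s}. For any stable configuration u, in any toppling sequence stabilizing u + β each vertex of V₀ topples at most once, and u is recurrent if and only if every vertex of V₀ topples exactly once in the stabilization of u + β; equivalently, u is recurrent if and only if σ(u + β) = u. -/
namespace SandpilePaper

variable {V : Type*} [Fintype V] [DecidableEq V]

/-- Configurations: assignments of numbers of grains to ordinary (non-sink) vertices. -/
abbrev Conf (s : V) : Type _ := {i : V // i ≠ s} → ℕ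

/-- The degree of a vertex: `deg i = ∑ j, e i j`. -/
def deg (e : V → V → ℕ) (i : V) : ℕ := ∑ j, e i j

/-- Toppling the (unstable) vertex `i`. -/
def toppleAt (e : V → V → ℕ) (s : V) (i : {i : V // i ≠ s}) (u : Conf s) : Conf s :=
  fun j => if j = i then u i - deg e i.1 + e i.1 i.1 else u j + e i.1 j.1

/-- One toppling step: some unstable vertex topples. -/
def Topple (e : V → V → ℕ) (s : V) (u v : Conf s) : Prop :=
  ∃ i : {i : V // i ≠ s}, deg e i.1 ≤ u i ∧ v = toppleAt e s i u

/-- A configuration is stable if every ordinary vertex has fewer grains than its degree. -/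
def Stable (e : V → V → ℕ) (s : V) (u : Conf s) : Prop :=
  ∀ j : {i : V // i ≠ s}, u j < deg e j.1

/-- The underlying simple graph: edges between distinct vertices with positive multiplicity. -/
def graph (e : V → V → ℕ) : SimpleGraph V := SimpleGraph.fromRel fun i j => 0 < e i j

/-- `σ` is a stabilization map: `σ u` is stable and reached from `u` by finitely many topplings. -/
def IsStabilization (e : V → V → ℕ) (s : V) (σ : Conf s → Conf s) : Prop :=
  ∀ u, Stable e s (σ u) ∧ Relation.ReflTransGen (Topple e s) u (σ u)

/-- A stable configuration `u` is recurrent if every configuration can reach it. -/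
def Recurrent (e : V → V → ℕ) (s : V) (σ : Conf s → Conf s) (u : Conf s) : Prop :=
  Stable e s u ∧ ∀ v : Conf s, ∃ w : Conf s, σ (v + w) = u

/-- Apply a sequence of topplings. -/
def applySeq (e : V → V → ℕ) (s : V) (u : Conf s) : List {i : V // i ≠ s} → Conf s
  | [] => u
  | i :: L => applySeq e s (toppleAt e s i u) L

/-- A toppling sequence is valid if each toppled vertex is unstable when toppled. -/
def ValidSeq (e : V → V → ℕ) (s : V) (u : Conf s) : List {i : V // i ≠ s} → Prop
  | [] => True
  | i :: L => deg e i.1 ≤ u i ∧ ValidSeq e s (toppleAt e s i u) L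

/-- `succeq e s i j` means `i ⪰ j`: `j` lies on the unique path from `i` to the sink `s`. -/
def succeq (e : V → V → ℕ) (s i j : V) : Prop :=
  (graph e).dist i s = (graph e).dist i j + (graph e).dist j s

noncomputable instance (e : V → V → ℕ) (s i j : V) : Decidable (succeq e s i j) := Nat.decEq _ _

/-- `p` assigns to each ordinary vertex its parent: its neighbor on the path to the sink. -/
def IsParent (e : V → V → ℕ) (s : V) (p : {i : V // i ≠ s} → V) : Prop :=
  ∀ j : {i : V // i ≠ s}, (graph e).Adj j.1 (p j) ∧
    (graph e).dist (p j) s + 1 = (graph e).dist j.1 s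

/-- The set `{i : i ⪰ j}`. -/
noncomputable def descendants (e : V → V → ℕ) (s : V) (j : {i : V // i ≠ s}) :
    Finset {i : V // i ≠ s} :=
  Finset.univ.filter fun i => succeq e s i.1 j.1

/-- The set `{i : i ≻ j}`. -/
noncomputable def strictDescendants (e : V → V → ℕ) (s : V) (j : {i : V // i ≠ s}) :
    Finset {i : V // i ≠ s} :=
  Finset.univ.filter fun i => i ≠ j ∧ succeq e s i.1 j.1

/-- `j` is a leaf: its parent is its only neighbor in the underlying tree. -/
def IsLeaf (e : V → V → ℕ) (s : V) (p : {i : V // i ≠ s} → V) (j : {i : V // i ≠ s}) : Prop :=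
  ∀ k : V, (graph e).Adj j.1 k → k = p j

/-- Rows of the toppling matrix `Δ`. -/
def deltaRow (e : V → V → ℕ) (s : V) (i j : {i : V // i ≠ s}) : ℤ :=
  if i = j then (deg e i.1 : ℤ) - (e i.1 i.1 : ℤ) else -(e i.1 j.1 : ℤ)

/-- The lattice `Λ` spanned by the rows of the toppling matrix. -/
def lattice (e : V → V → ℕ) (s : V) : AddSubgroup ({i : V // i ≠ s} → ℤ) :=
  AddSubgroup.closure (Set.range (deltaRow e s))

/-- The map `φ(u)_j = ∑_{i ⪰ j} u_i (mod e_{j,p(j)})`. -/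
noncomputable def phi (e : V → V → ℕ) (s : V) (p : {i : V // i ≠ s} → V) (u : Conf s)
    (j : {i : V // i ≠ s}) : ZMod (e j.1 (p j)) :=
  ∑ i ∈ descendants e s j, (u i : ZMod (e j.1 (p j)))

/-- The map `φ` on integer vectors. -/
noncomputable def phiZ (e : V → V → ℕ) (s : V) (p : {i : V // i ≠ s} → V) (u : {i : V // i ≠ s} → ℤ)
    (j : {i : V // i ≠ s}) : ZMod (e j.1 (p j)) :=
  ∑ i ∈ descendants e s j, (u i : ZMod (e j.1 (p j)))



/-!
Since `deg j = β j + ∑ i, e i j`, toppling every ordinary vertex exactly once removes exactly `β`.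
Hence, for stable `u`, no vertex topples twice while `u + β` is stabilized: just before a second
toppling it would hold at most `u j + β j + ∑ i, e i j - deg j = u j < deg j` grains. If every
vertex topples, `u + β` returns to `u`; conversely, when it returns to `u` the vertices that never
topple receive nothing, so none of them is adjacent to the sink or to a toppled vertex, and by
connectivity there are none.

The abelian property follows from the least action principle: a legal toppling sequence never
topples a vertex more often than one that ends in a stable configuration.

If `u = σ x` with every vertex toppling (e.g. `x ≥ deg`), ordering the vertices by their last
toppling gives a legal toppling sequence of `u + β`, so recurrent configurations pass the test.
Conversely, by a maximum principle, two stable configurations that pass the test and differ by an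
integer combination of toppling vectors are equal; every `v` can be completed to such an `x ≥ deg`
congruent to `u`, whence `σ (v + w) = u`.
-/

theorem _root_.List.sum_map_eq_sum_count {α M : Type*} [Fintype α] [BEq α] [LawfulBEq α]
    [AddCommMonoid M] (l : List α) (f : α → M) : (l.map f).sum = ∑ i, l.count i • f i := by
  classical
  induction l with
  | nil => simp
  | cons a l ih =>
    simp only [List.map_cons, List.sum_cons, List.count_cons, beq_iff_eq, add_smul, ite_smul,
      one_smul, zero_smul, Finset.sum_add_distrib, Finset.sum_ite_eq, Finset.mem_univ, if_true,
      ih, add_comm]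

theorem _root_.List.sum_map_eq_sum_univ {α M : Type*} [Fintype α] [BEq α] [LawfulBEq α]
    [AddCommMonoid M] {l : List α} (hnd : l.Nodup) (hall : ∀ i, i ∈ l) (f : α → M) :
    (l.map f).sum = ∑ i, f i := by
  simp [List.sum_map_eq_sum_count, List.count_eq_one_of_mem hnd (hall _)]

/-- `β` of the burning algorithm. -/
def sinkEdges (e : V → V → ℕ) (s : V) : Conf s := fun j => e j.1 s

section

variable {e : V → V → ℕ} {s : V}

theorem applySeq_append (v : Conf s) (A B : List {i : V // i ≠ s}) :
    applySeq e s v (A ++ B) = applySeq e s (applySeq e s v A) B := by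
  induction A generalizing v with
  | nil => rfl
  | cons a A ih => exact ih _

theorem validSeq_append (v : Conf s) (A B : List {i : V // i ≠ s}) :
    ValidSeq e s v (A ++ B) ↔ ValidSeq e s v A ∧ ValidSeq e s (applySeq e s v A) B := by
  induction A generalizing v with
  | nil => simp [ValidSeq, applySeq]
  | cons a A ih => simp only [List.cons_append, ValidSeq, applySeq, ih, and_assoc]

theorem applySeq_add_count_mul_deg {v : Conf s} {L : List {i : V // i ≠ s}}
    (hL : ValidSeq e s v L) (j : {i : V // i ≠ s}) :
    applySeq e s v L j + L.count j * deg e j.1 = v j + (L.map fun i => e i.1 j.1).sum := by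
  induction L generalizing v with
  | nil => simp [applySeq]
  | cons a L ih =>
    have h := ih hL.2
    have ha := hL.1
    simp only [applySeq, List.map_cons, List.sum_cons, List.count_cons, beq_iff_eq,
      toppleAt] at h ⊢
    by_cases hja : j = a
    · subst hja
      simp only [if_true, add_mul, one_mul] at h ⊢
      omega
    · simp only [hja, Ne.symm hja, if_false, add_zero] at h ⊢
      omega

theorem cast_applySeq {v : Conf s} {L : List {i : V // i ≠ s}} (hL : ValidSeq e s v L)
    (j : {i : V // i ≠ s}) :
    (applySeq e s v L j : ℤ) =
      v j - L.count j * deg e j.1 + ∑ i, (L.count i : ℤ) * e i.1 j.1 := by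
  have h := applySeq_add_count_mul_deg hL j
  rw [List.sum_map_eq_sum_count] at h
  have h' := congrArg (Nat.cast : ℕ → ℤ) h
  push_cast [smul_eq_mul] at h'
  linarith

theorem mem_of_deg_le {v : Conf s} {L : List {i : V // i ≠ s}} (hL : ValidSeq e s v L)
    (hst : Stable e s (applySeq e s v L)) {i : {i : V // i ≠ s}} (hi : deg e i.1 ≤ v i) :
    i ∈ L := by
  by_contra hiL
  have h := applySeq_add_count_mul_deg hL i
  rw [List.count_eq_zero_of_not_mem hiL] at h
  have := hst i
  omega

theorem count_le_count_of_stable {v : Conf s} {L M : List {i : V // i ≠ s}}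
    (hL : ValidSeq e s v L) (hM : ValidSeq e s v M) (hst : Stable e s (applySeq e s v M))
    (i : {i : V // i ≠ s}) : L.count i ≤ M.count i := by
  induction L using List.reverseRecOn generalizing i with
  | nil => simp
  | append_singleton L a ih =>
    rw [validSeq_append] at hL
    have ih := ih hL.1
    have hlt : L.count a < M.count a := by
      by_contra! hge
      have hcount : M.count a = L.count a := le_antisymm hge (ih a)
      have hmono : (applySeq e s v L a : ℤ) ≤ applySeq e s v M a := by
        rw [cast_applySeq hL.1, cast_applySeq hM, hcount]
        gcongr with k
        exact_mod_cast ih k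
      have := hL.2.1
      have := hst a
      omega
    by_cases hia : i = a
    · subst hia
      simpa using hlt
    · simpa [List.count_singleton, Ne.symm hia] using ih i

theorem applySeq_eq_of_stable {v : Conf s} {L M : List {i : V // i ≠ s}}
    (hL : ValidSeq e s v L) (hM : ValidSeq e s v M) (hstL : Stable e s (applySeq e s v L))
    (hstM : Stable e s (applySeq e s v M)) : applySeq e s v L = applySeq e s v M := by
  have hcount : ∀ i, L.count i = M.count i := fun i =>
    le_antisymm (count_le_count_of_stable hL hM hstM i) (count_le_count_of_stable hM hL hstL i)
  funext j
  have h := cast_applySeq hL j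
  simp only [hcount, ← cast_applySeq hM j] at h
  exact_mod_cast h

theorem exists_validSeq_of_reflTransGen {v z : Conf s}
    (h : Relation.ReflTransGen (Topple e s) v z) :
    ∃ L, ValidSeq e s v L ∧ applySeq e s v L = z := by
  induction h with
  | refl => exact ⟨[], trivial, rfl⟩
  | tail _ hstep ih =>
    obtain ⟨L, hL, rfl⟩ := ih
    obtain ⟨i, hi, rfl⟩ := hstep
    refine ⟨L ++ [i], (validSeq_append _ _ _).2 ⟨hL, hi, trivial⟩, ?_⟩
    rw [applySeq_append]
    rfl

theorem IsStabilization.exists_validSeq {σ : Conf s → Conf s} (hσ : IsStabilization e s σ)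
    (v : Conf s) : ∃ L, ValidSeq e s v L ∧ applySeq e s v L = σ v :=
  exists_validSeq_of_reflTransGen (hσ v).2

theorem IsStabilization.apply_eq_applySeq {σ : Conf s → Conf s} (hσ : IsStabilization e s σ)
    {v : Conf s} {L : List {i : V // i ≠ s}} (hL : ValidSeq e s v L)
    (hst : Stable e s (applySeq e s v L)) : σ v = applySeq e s v L := by
  obtain ⟨M, hM, hMσ⟩ := hσ.exists_validSeq v
  rw [← hMσ]
  exact applySeq_eq_of_stable hM hL (hMσ ▸ (hσ v).1) hst

theorem deg_eq_sinkEdges_add_sum (hsym : ∀ i j, e i j = e j i) (j : {i : V // i ≠ s}) :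
    deg e j.1 = sinkEdges e s j + ∑ i : {i : V // i ≠ s}, e i.1 j.1 := by
  rw [deg, Fintype.sum_eq_add_sum_subtype_ne _ s, sinkEdges]
  simp only [hsym j.1]

theorem applySeq_lt_deg_of_mem (hsym : ∀ i j, e i j = e j i) {u : Conf s} (hu : Stable e s u)
    {P : List {i : V // i ≠ s}} (hP : ValidSeq e s (u + sinkEdges e s) P) (hnd : P.Nodup)
    {a : {i : V // i ≠ s}} (ha : a ∈ P) :
    applySeq e s (u + sinkEdges e s) P a < deg e a.1 := by
  have h := applySeq_add_count_mul_deg hP a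
  have hsum : (P.map fun i => e i.1 a.1).sum ≤ ∑ i : {i : V // i ≠ s}, e i.1 a.1 := by
    rw [List.sum_map_eq_sum_count]
    exact Finset.sum_le_sum fun i _ =>
      mul_le_of_le_one_left (Nat.zero_le _) (List.nodup_iff_count_le_one.1 hnd i)
  rw [List.count_eq_one_of_mem hnd ha, Pi.add_apply] at h
  have := deg_eq_sinkEdges_add_sum hsym a
  have := hu a
  omega

theorem nodup_of_validSeq_add_sinkEdges (hsym : ∀ i j, e i j = e j i) {u : Conf s}
    (hu : Stable e s u) {L : List {i : V // i ≠ s}} (hL : ValidSeq e s (u + sinkEdges e s) L) :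
    L.Nodup := by
  induction L using List.reverseRecOn with
  | nil => exact List.nodup_nil
  | append_singleton P a ih =>
    rw [validSeq_append] at hL
    have hP := ih hL.1
    refine List.nodup_append.2 ⟨hP, List.nodup_singleton a, ?_⟩
    rintro b hb c hc rfl
    rw [List.mem_singleton] at hc
    subst hc
    exact absurd hL.2.1 (not_le.2 (applySeq_lt_deg_of_mem hsym hu hL.1 hP hb))

theorem applySeq_add_sinkEdges_of_nodup (hsym : ∀ i j, e i j = e j i) {c : Conf s}
    {L : List {i : V // i ≠ s}} (hL : ValidSeq e s (c + sinkEdges e s) L) (hnd : L.Nodup)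
    (hall : ∀ i, i ∈ L) : applySeq e s (c + sinkEdges e s) L = c := by
  funext j
  have h := applySeq_add_count_mul_deg hL j
  rw [List.count_eq_one_of_mem hnd (hall j), List.sum_map_eq_sum_univ hnd hall,
    Pi.add_apply] at h
  have := deg_eq_sinkEdges_add_sum hsym j
  omega

theorem forall_mem_of_applySeq_add_sinkEdges_eq (hsym : ∀ i j, e i j = e j i)
    (hconn : (graph e).Connected) {u : Conf s} {L : List {i : V // i ≠ s}}
    (hL : ValidSeq e s (u + sinkEdges e s) L) (hcyc : applySeq e s (u + sinkEdges e s) L = u)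
    (i : {i : V // i ≠ s}) : i ∈ L := by
  have hisolated : ∀ a, a ∉ L → e a.1 s = 0 ∧ ∀ b ∈ L, e b.1 a.1 = 0 := by
    intro a ha
    have h := applySeq_add_count_mul_deg hL a
    rw [hcyc, List.count_eq_zero_of_not_mem ha, Pi.add_apply, sinkEdges] at h
    have hsum : (L.map fun i => e i.1 a.1).sum = 0 := by omega
    exact ⟨by omega, fun b hb => List.sum_eq_zero_iff.1 hsum _ (List.mem_map_of_mem hb)⟩
  suffices ∀ a b (w : (graph e).Walk a b), b = s → ∀ ha : a ≠ s, ⟨a, ha⟩ ∈ L from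
    this _ _ (hconn.preconnected i.1 s).some rfl i.2
  intro a b w
  induction w with
  | nil => exact fun hb ha => absurd hb ha
  | @cons a c b hadj w ih =>
    intro hb ha
    by_contra haL
    obtain ⟨hsink, hnbr⟩ := hisolated _ haL
    dsimp only at hsink hnbr
    have hpos : 0 < e a c := by
      rcases ((SimpleGraph.fromRel_adj _ _ _).1 hadj).2 with h | h
      · exact h
      · rwa [hsym]
    by_cases hc : c = s
    · subst hc
      omega
    · have := hnbr _ (ih hb hc)
      dsimp only at this
      rw [hsym] at this
      omega

theorem applySeq_add_sinkEdges_eq_self_iff (hsym : ∀ i j, e i j = e j i)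
    (hconn : (graph e).Connected) {u : Conf s} (hu : Stable e s u) {L : List {i : V // i ≠ s}}
    (hL : ValidSeq e s (u + sinkEdges e s) L) :
    applySeq e s (u + sinkEdges e s) L = u ↔ ∀ i, i ∈ L :=
  ⟨forall_mem_of_applySeq_add_sinkEdges_eq hsym hconn hL,
    applySeq_add_sinkEdges_of_nodup hsym hL (nodup_of_validSeq_add_sinkEdges hsym hu hL)⟩

theorem validSeq_of_forall_eq_append {c : Conf s} {P : List {i : V // i ≠ s}} (hnd : P.Nodup)
    (h : ∀ P₁ j P₂, P = P₁ ++ j :: P₂ → deg e j.1 ≤ c j + (P₁.map fun i => e i.1 j.1).sum) :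
    ValidSeq e s c P := by
  induction P generalizing c with
  | nil => trivial
  | cons a P ih =>
    refine ⟨by simpa using h [] a P rfl, ih hnd.of_cons fun P₁ j P₂ hP => ?_⟩
    have hja : j ≠ a := by
      rintro rfl
      exact (List.nodup_cons.1 hnd).1 (hP ▸ List.mem_append_right _ List.mem_cons_self)
    have := h (a :: P₁) j P₂ (by rw [hP]; rfl)
    simp only [toppleAt, hja, if_false, List.map_cons, List.sum_cons] at this ⊢
    omega

/-- `L.dedup` keeps last occurrences, so `P₂` lists the vertices whose last toppling comes after
that of `j`. After its own last toppling `j` still holds its loops, and each of those vertices then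
sends it `e i j` grains. -/
theorem le_applySeq_of_dedup_eq {x : Conf s} {L : List {i : V // i ≠ s}} (hL : ValidSeq e s x L)
    {P₁ P₂ : List {i : V // i ≠ s}} {j : {i : V // i ≠ s}} (h : L.dedup = P₁ ++ j :: P₂) :
    e j.1 j.1 + (P₂.map fun i => e i.1 j.1).sum ≤ applySeq e s x L j := by
  induction L generalizing x P₁ with
  | nil => simp at h
  | cons a L ih =>
    by_cases haL : a ∈ L
    · rw [List.dedup_cons_of_mem haL] at h
      exact ih hL.2 h
    · rw [List.dedup_cons_of_notMem haL] at h
      cases P₁ with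
      | cons b P₁ => exact ih hL.2 (List.cons.inj h).2
      | nil =>
        obtain ⟨rfl, rfl⟩ := List.cons.inj h
        have hval := applySeq_add_count_mul_deg hL.2 a
        have hsub := ((List.dedup_sublist L).map fun i => e i.1 a.1).sum_le_sum
          fun _ _ => Nat.zero_le _
        rw [List.count_eq_zero_of_not_mem haL] at hval
        simp only [toppleAt, if_true] at hval
        have := hL.1
        show _ ≤ applySeq e s (toppleAt e s a x) L a
        omega

theorem validSeq_dedup_add_sinkEdges (hsym : ∀ i j, e i j = e j i) {x : Conf s}
    {L : List {i : V // i ≠ s}} (hL : ValidSeq e s x L) (hall : ∀ i, i ∈ L) :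
    ValidSeq e s (applySeq e s x L + sinkEdges e s) L.dedup := by
  refine validSeq_of_forall_eq_append (List.nodup_dedup L) ?_
  intro P₁ j P₂ h
  have hkey := le_applySeq_of_dedup_eq hL h
  have hsum := List.sum_map_eq_sum_univ (List.nodup_dedup L) (fun i => List.mem_dedup.2 (hall i))
    fun i => e i.1 j.1
  rw [h, List.map_append, List.sum_append, List.map_cons, List.sum_cons] at hsum
  have := deg_eq_sinkEdges_add_sum hsym j
  rw [Pi.add_apply]
  omega

/-- Maximum principle: look at the first vertex `j` of maximal `μ` to topple while `u` burns. -/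
theorem nonpos_of_stable_of_eq_add (hsym : ∀ i j, e i j = e j i) {u y : Conf s}
    (hu : Stable e s u) (hy : Stable e s y) {L : List {i : V // i ≠ s}}
    (hL : ValidSeq e s (u + sinkEdges e s) L) (hall : ∀ i, i ∈ L) (μ : {i : V // i ≠ s} → ℤ)
    (heq : ∀ j, (y j : ℤ) = u j + (μ j * deg e j.1 - ∑ i, μ i * e i.1 j.1))
    (a : {i : V // i ≠ s}) : μ a ≤ 0 := by
  by_contra! ha
  obtain ⟨m, -, hm⟩ := Finset.exists_max_image Finset.univ μ ⟨a, Finset.mem_univ a⟩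
  obtain ⟨j, hfind⟩ := Option.isSome_iff_exists.1
    (List.find?_isSome.2 ⟨m, hall m, decide_eq_true rfl⟩ :
      (L.find? fun i => decide (μ i = μ m)).isSome)
  obtain ⟨hj, Q₁, Q₂, rfl, hQ₁⟩ := List.find?_eq_some_iff_append.1 hfind
  simp only [decide_eq_true_eq, Bool.not_eq_eq_eq_not, Bool.not_true, decide_eq_false_iff_not]
    at hj hQ₁
  have hnd : Q₁.Nodup := (nodup_of_validSeq_add_sinkEdges hsym hu hL).of_append_left
  rw [validSeq_append] at hL
  have hval := applySeq_add_count_mul_deg hL.1 j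
  rw [List.count_eq_zero_of_not_mem fun h => hQ₁ j h hj, List.sum_map_eq_sum_count] at hval
  have hfire : (deg e j.1 : ℤ) ≤ u j + sinkEdges e s j + ∑ i, (Q₁.count i : ℤ) * e i.1 j.1 := by
    have := hL.2.1
    simp only [Pi.add_apply, smul_eq_mul] at hval
    exact_mod_cast (by omega : deg e j.1 ≤ u j + sinkEdges e s j + _)
  have hbound : ∑ i, μ i * e i.1 j.1 + ∑ i, (Q₁.count i : ℤ) * e i.1 j.1 ≤
      μ m * ∑ i : {i : V // i ≠ s}, (e i.1 j.1 : ℤ) := by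
    rw [← Finset.sum_add_distrib, Finset.mul_sum]
    refine Finset.sum_le_sum fun i _ => ?_
    rw [← add_mul]
    refine mul_le_mul_of_nonneg_right ?_ (Nat.cast_nonneg _)
    by_cases hi : i ∈ Q₁
    · have := lt_of_le_of_ne (hm i (Finset.mem_univ i)) (hQ₁ i hi)
      rw [List.count_eq_one_of_mem hnd hi]
      push_cast
      linarith
    · rw [List.count_eq_zero_of_not_mem hi]
      simpa using hm i (Finset.mem_univ i)
  have hdeg : (deg e j.1 : ℤ) = sinkEdges e s j + ∑ i : {i : V // i ≠ s}, (e i.1 j.1 : ℤ) := by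
    exact_mod_cast deg_eq_sinkEdges_add_sum hsym j
  have hsink : (sinkEdges e s j : ℤ) ≤ μ m * sinkEdges e s j :=
    le_mul_of_one_le_left (Nat.cast_nonneg _) (by linarith [hm a (Finset.mem_univ a)])
  have hyj := heq j
  have hyst : (y j : ℤ) < deg e j.1 := by exact_mod_cast hy j
  rw [hj, hdeg, mul_add] at hyj
  linarith

theorem eq_of_stable_of_eq_add (hsym : ∀ i j, e i j = e j i) {u y : Conf s}
    (hu : Stable e s u) (hy : Stable e s y) {Lu Ly : List {i : V // i ≠ s}}
    (hLu : ValidSeq e s (u + sinkEdges e s) Lu) (hallu : ∀ i, i ∈ Lu)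
    (hLy : ValidSeq e s (y + sinkEdges e s) Ly) (hally : ∀ i, i ∈ Ly) (μ : {i : V // i ≠ s} → ℤ)
    (heq : ∀ j, (y j : ℤ) = u j + (μ j * deg e j.1 - ∑ i, μ i * e i.1 j.1)) : y = u := by
  have heq' : ∀ j, (u j : ℤ) = y j + ((-μ) j * deg e j.1 - ∑ i, (-μ) i * e i.1 j.1) := by
    intro j
    simp only [Pi.neg_apply, neg_mul, Finset.sum_neg_distrib, heq j]
    ring
  have hμ : ∀ i, μ i = 0 := fun i =>
    le_antisymm (nonpos_of_stable_of_eq_add hsym hu hy hLu hallu μ heq i)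
      (neg_nonpos.1 (nonpos_of_stable_of_eq_add hsym hy hu hLy hally (-μ) heq' i))
  funext j
  simpa [hμ] using heq j

theorem Recurrent.apply_add_sinkEdges (hsym : ∀ i j, e i j = e j i) {σ : Conf s → Conf s}
    (hσ : IsStabilization e s σ) {u : Conf s} (hrec : Recurrent e s σ u) :
    σ (u + sinkEdges e s) = u := by
  obtain ⟨w, hw⟩ := hrec.2 fun j => deg e j.1
  obtain ⟨L, hL, hLσ⟩ := hσ.exists_validSeq ((fun j => deg e j.1) + w)
  rw [hw] at hLσ
  have hall : ∀ i, i ∈ L := fun i =>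
    mem_of_deg_le hL (hLσ ▸ hrec.1) (Nat.le_add_right _ _)
  have hD := validSeq_dedup_add_sinkEdges hsym hL hall
  rw [hLσ] at hD
  have hDu := applySeq_add_sinkEdges_of_nodup hsym hD (List.nodup_dedup L)
    fun i => List.mem_dedup.2 (hall i)
  rw [hσ.apply_eq_applySeq hD (by rw [hDu]; exact hrec.1), hDu]

/-- With `z₀ = σ (v + 2 deg)`, the configuration `v + w` for `w = u + 2 deg - z₀` is at least `deg`
and differs from `u` by the topplings `v + 2 deg ⟶ z₀`, so `σ (v + w)` passes the burning test and
differs from `u` by toppling vectors. -/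
theorem recurrent_of_apply_add_sinkEdges (hsym : ∀ i j, e i j = e j i)
    (hconn : (graph e).Connected) {σ : Conf s → Conf s} (hσ : IsStabilization e s σ)
    {u : Conf s} (hu : Stable e s u) (hfix : σ (u + sinkEdges e s) = u) : Recurrent e s σ u := by
  obtain ⟨Lu, hLu, hLuσ⟩ := hσ.exists_validSeq (u + sinkEdges e s)
  have hallu := forall_mem_of_applySeq_add_sinkEdges_eq hsym hconn hLu (hLuσ.trans hfix)
  refine ⟨hu, fun v => ?_⟩
  set x₀ : Conf s := fun j => v j + 2 * deg e j.1
  obtain ⟨L₀, hL₀, hz₀⟩ := hσ.exists_validSeq x₀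
  have hz₀st := (hσ x₀).1
  refine ⟨fun j => u j + 2 * deg e j.1 - σ x₀ j, ?_⟩
  set x := v + fun j => u j + 2 * deg e j.1 - σ x₀ j
  have hx : ∀ j, x j + σ x₀ j = u j + x₀ j := fun j => by
    have := hz₀st j
    have hx₀ : x₀ j = v j + 2 * deg e j.1 := rfl
    simp only [x, Pi.add_apply]
    omega
  obtain ⟨L, hL, hy⟩ := hσ.exists_validSeq x
  have hall : ∀ i, i ∈ L := fun i => mem_of_deg_le hL (hy ▸ (hσ x).1) (by
    have := hz₀st i
    simp only [x, Pi.add_apply]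
    omega)
  have hD := validSeq_dedup_add_sinkEdges hsym hL hall
  rw [hy] at hD
  refine eq_of_stable_of_eq_add hsym hu (hσ x).1 hLu hallu hD
    (fun i => List.mem_dedup.2 (hall i)) (fun i => L₀.count i - L.count i) fun j => ?_
  have h₀ := cast_applySeq hL₀ j
  have h := cast_applySeq hL j
  have hxj : (x j : ℤ) + σ x₀ j = u j + x₀ j := by exact_mod_cast hx j
  rw [hz₀] at h₀
  rw [hy] at h
  simp only [sub_mul, Finset.sum_sub_distrib]
  linarith

theorem recurrent_iff_apply_add_sinkEdges (hsym : ∀ i j, e i j = e j i)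
    (hconn : (graph e).Connected) {σ : Conf s → Conf s} (hσ : IsStabilization e s σ)
    {u : Conf s} (hu : Stable e s u) : Recurrent e s σ u ↔ σ (u + sinkEdges e s) = u :=
  ⟨Recurrent.apply_add_sinkEdges hsym hσ, recurrent_of_apply_add_sinkEdges hsym hconn hσ hu⟩

end

theorem stmt_3 (e : V → V → ℕ) (s : V) (hsym : ∀ i j : V, e i j = e j i)
    (hconn : (graph e).Connected)
    (σ : Conf s → Conf s) (hσ : IsStabilization e s σ)
    (u : Conf s) (hu : Stable e s u) :
    (∀ L : List {i : V // i ≠ s}, ValidSeq e s (u + fun j => e j.1 s) L → L.Nodup) ∧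
    (∀ L : List {i : V // i ≠ s}, ValidSeq e s (u + fun j => e j.1 s) L →
      Stable e s (applySeq e s (u + fun j => e j.1 s) L) →
      (Recurrent e s σ u ↔ ∀ i : {i : V // i ≠ s}, i ∈ L)) ∧
    (Recurrent e s σ u ↔ σ (u + fun j => e j.1 s) = u) := by
  have hrec := recurrent_iff_apply_add_sinkEdges hsym hconn hσ hu
  refine ⟨fun L hL => nodup_of_validSeq_add_sinkEdges hsym hu hL, fun L hL hst => ?_, hrec⟩
  rw [hrec, hσ.apply_eq_applySeq (v := u + sinkEdges e s) hL hst]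
  exact applySeq_add_sinkEdges_eq_self_iff hsym hconn hu hL

end SandpilePaper
end

section
/- Let T be a thick tree with loops with sink s. A configuration u ∈ ℕ^{V₀} is recurrent if and only if for every j ∈ V₀ one has deg(j) > u_j ≥ deg(j) − e_{j,p(j)}; that is, the sandpile group G equals {u ∈ ℕ^{V₀} : ∀ j ∈ V₀, deg(j) > u_j ≥ deg(j) − e_{j,p(j)}}. -/
/-!
A recurrent configuration `u` is the stabilization of a configuration in which every vertex is
unstable. Cut the edge from `j` to its parent: among the vertices of the subtree of `j`, the one
whose last toppling comes first keeps its loops and afterwards receives a grain along every edge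
from the rest of the subtree. For a vertex other than `j` these are all its edges, which stability
of `u` forbids; so it is `j`, and `u_j ≥ deg j - e_{j,p(j)}`.

Conversely, given `v`, pick a firing script `k ≥ 0` whose Laplacian dominates `v`, and add grains
so that `v + w = u + Δk`. This configuration topples back to `u`: a vertex of maximal `k` closest
to the sink holds at least `u_j + e_{j,p(j)} ≥ deg j` grains, so it can fire once. Since
stabilization is unique, `σ (v + w) = u`.
-/

namespace SandpilePaper

variable {V : Type*} [Fintype V] [DecidableEq V]

section Toppling

variable {e : V → V → ℕ} {s : V}

@[simp]
lemma toppleAt_self (i : {i : V // i ≠ s}) (u : Conf s) :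
    toppleAt e s i u i = u i - deg e i.1 + e i.1 i.1 := by
  simp [toppleAt]

@[simp]
lemma toppleAt_of_ne {i m : {i : V // i ≠ s}} (u : Conf s) (h : m ≠ i) :
    toppleAt e s i u m = u m + e i.1 m.1 := by
  simp [toppleAt, h]

lemma toppleAt_comm {i j : {i : V // i ≠ s}} {u : Conf s} (hij : i ≠ j)
    (hi : deg e i.1 ≤ u i) (hj : deg e j.1 ≤ u j) :
    toppleAt e s j (toppleAt e s i u) = toppleAt e s i (toppleAt e s j u) := by
  funext m
  unfold toppleAt
  by_cases hmi : m = i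
  · subst hmi; simp [hij]; omega
  · by_cases hmj : m = j
    · subst hmj; simp [hmi]; omega
    · simp [hmi, hmj]; omega

lemma topple_diamond {u v₁ v₂ : Conf s} (h₁ : Topple e s u v₁) (h₂ : Topple e s u v₂) :
    ∃ w, Relation.ReflGen (Topple e s) v₁ w ∧ Relation.ReflTransGen (Topple e s) v₂ w := by
  obtain ⟨i, hi, rfl⟩ := h₁
  obtain ⟨j, hj, rfl⟩ := h₂
  rcases eq_or_ne i j with rfl | hij
  · exact ⟨_, .refl, .refl⟩
  refine ⟨toppleAt e s j (toppleAt e s i u), .single ⟨j, ?_, rfl⟩,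
    .single ⟨i, ?_, toppleAt_comm hij hi hj⟩⟩
  · rw [toppleAt_of_ne _ hij.symm]; omega
  · rw [toppleAt_of_ne _ hij]; omega

lemma Stable.eq_of_reflTransGen {u v : Conf s} (hu : Stable e s u)
    (h : Relation.ReflTransGen (Topple e s) u v) : v = u := by
  rcases h.cases_head with rfl | ⟨_, ⟨i, hi, -⟩, -⟩
  · rfl
  · exact absurd (hu i) hi.not_gt

theorem eq_of_reflTransGen_of_stable {x y₁ y₂ : Conf s}
    (h₁ : Relation.ReflTransGen (Topple e s) x y₁)
    (h₂ : Relation.ReflTransGen (Topple e s) x y₂)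
    (hy₁ : Stable e s y₁) (hy₂ : Stable e s y₂) : y₁ = y₂ := by
  obtain ⟨z, hz₁, hz₂⟩ := Relation.church_rosser (fun _ _ _ => topple_diamond) h₁ h₂
  rw [← hy₁.eq_of_reflTransGen hz₁, ← hy₂.eq_of_reflTransGen hz₂]

end Toppling

section ForbiddenSubconfiguration

variable {e : V → V → ℕ} {s : V}

lemma exists_applySeq_eq_of_reflTransGen {x y : Conf s}
    (h : Relation.ReflTransGen (Topple e s) x y) : ∃ L, applySeq e s x L = y := by
  induction h using Relation.ReflTransGen.head_induction_on with
  | refl => exact ⟨[], rfl⟩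
  | head hstep _ ih =>
    obtain ⟨i, -, rfl⟩ := hstep
    obtain ⟨L, hL⟩ := ih
    exact ⟨i :: L, hL⟩

lemma add_sum_le_applySeq {n : {i : V // i ≠ s}} {L : List {i : V // i ≠ s}} (hn : n ∉ L)
    {T : Finset {i : V // i ≠ s}} (hT : ∀ i ∈ T, i ∈ L) (x : Conf s) :
    x n + ∑ i ∈ T, e i.1 n.1 ≤ applySeq e s x L n := by
  induction L generalizing x T with
  | nil =>
    obtain rfl : T = ∅ := Finset.eq_empty_of_forall_notMem fun i hi => by simpa using hT i hi
    simp [applySeq]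
  | cons t L ih =>
    rw [List.mem_cons, not_or] at hn
    have hT' : ∀ i ∈ T.erase t, i ∈ L := fun i hi =>
      (List.mem_cons.1 (hT i (Finset.mem_of_mem_erase hi))).resolve_left
        (Finset.ne_of_mem_erase hi)
    have hsum : ∑ i ∈ T, e i.1 n.1 ≤ e t.1 n.1 + ∑ i ∈ T.erase t, e i.1 n.1 := by
      by_cases ht : t ∈ T
      · rw [Finset.add_sum_erase T (fun i => e i.1 n.1) ht]
      · rw [Finset.erase_eq_of_notMem ht]; omega
    have := ih hn.2 hT' (toppleAt e s t x)
    rw [toppleAt_of_ne _ hn.1] at this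
    exact (by omega : _ ≤ _).trans this

lemma exists_mem_sum_le_applySeq (L : List {i : V // i ≠ s}) {F : Finset {i : V // i ≠ s}}
    (hF : F.Nonempty) (hFL : ∀ f ∈ F, f ∈ L) (x : Conf s) :
    ∃ f ∈ F, ∑ i ∈ F, e i.1 f.1 ≤ applySeq e s x L f := by
  induction L generalizing x with
  | nil =>
    obtain ⟨f, hf⟩ := hF
    exact absurd (hFL f hf) List.not_mem_nil
  | cons t L ih =>
    by_cases hL : ∀ f ∈ F, f ∈ L
    · exact ih hL _
    obtain ⟨f, hfF, hfL⟩ : ∃ f ∈ F, f ∉ L := by simpa using hL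
    -- `f` is the vertex of `F` whose last toppling comes first
    obtain rfl : f = t := (List.mem_cons.1 (hFL f hfF)).resolve_right hfL
    have hrest : ∀ i ∈ F.erase f, i ∈ L := fun i hi =>
      (List.mem_cons.1 (hFL i (Finset.mem_of_mem_erase hi))).resolve_left
        (Finset.ne_of_mem_erase hi)
    refine ⟨f, hfF, ?_⟩
    have := add_sum_le_applySeq (e := e) hfL hrest (toppleAt e s f x)
    rw [toppleAt_self] at this
    rw [← Finset.add_sum_erase _ _ hfF]
    exact (by omega : _ ≤ _).trans this

theorem exists_mem_sum_le_of_reflTransGen {x y : Conf s}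
    (h : Relation.ReflTransGen (Topple e s) x y) {F : Finset {i : V // i ≠ s}}
    (hF : F.Nonempty) (hlt : ∀ f ∈ F, y f < x f) :
    ∃ f ∈ F, ∑ i ∈ F, e i.1 f.1 ≤ y f := by
  obtain ⟨L, rfl⟩ := exists_applySeq_eq_of_reflTransGen h
  refine exists_mem_sum_le_applySeq L hF (fun f hf => ?_) x
  by_contra hfL
  have := add_sum_le_applySeq (e := e) (T := ∅) hfL (by simp) x
  have := hlt f hf
  simp at *
  omega

end ForbiddenSubconfiguration

section Tree

variable {W : Type*} {e : W → W → ℕ} {s : W} {p : {i : W // i ≠ s} → W}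

lemma IsParent.edge_pos (hsym : ∀ i j : W, e i j = e j i) (hp : IsParent e s p)
    (j : {i : W // i ≠ s}) : 0 < e j.1 (p j) := by
  obtain ⟨-, h | h⟩ := (hp j).1
  exacts [h, hsym (p j) j.1 ▸ h]

lemma not_reachable_parent (htree : (graph e).IsTree) (hp : IsParent e s p)
    (j : {i : W // i ≠ s}) : ¬((graph e).deleteEdges {s(j.1, p j)}).Reachable j.1 (p j) :=
  SimpleGraph.isBridge_iff.1
    (SimpleGraph.isAcyclic_iff_forall_adj_isBridge.1 htree.isAcyclic (hp j).1)

lemma not_reachable_sink (htree : (graph e).IsTree) (hp : IsParent e s p)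
    (j : {i : W // i ≠ s}) : ¬((graph e).deleteEdges {s(j.1, p j)}).Reachable j.1 s := by
  classical
  intro hjs
  obtain ⟨Q, hQ⟩ := htree.connected.exists_walk_length_eq_dist (p j) s
  have hjQ : j.1 ∉ Q.support := fun hj => by
    have := (graph e).dist_le (Q.dropUntil j.1 hj)
    have := Q.length_dropUntil_le_length hj
    have := (hp j).2
    omega
  have hQ' : ((graph e).deleteEdges {s(j.1, p j)}).Reachable (p j) s :=
    SimpleGraph.reachable_deleteEdges_iff_exists_walk.2
      ⟨Q, fun he => hjQ (Q.fst_mem_support_of_mem_edges he)⟩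
  exact not_reachable_parent htree hp j (hjs.trans hQ'.symm)

lemma reachable_or_of_pos (htree : (graph e).IsTree) (hp : IsParent e s p)
    {j : {i : W // i ≠ s}} {f v : W}
    (hf : ((graph e).deleteEdges {s(j.1, p j)}).Reachable j.1 f) (hv : 0 < e f v) :
    ((graph e).deleteEdges {s(j.1, p j)}).Reachable j.1 v ∨ (f = j.1 ∧ v = p j) := by
  by_cases hfv : f = v
  · exact .inl (hfv ▸ hf)
  have hadj : (graph e).Adj f v := (SimpleGraph.fromRel_adj _ _ _).2 ⟨hfv, .inl hv⟩
  by_cases hedge : s(f, v) = s(j.1, p j)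
  · rcases Sym2.eq_iff.1 hedge with h | ⟨rfl, -⟩
    · exact .inr h
    · exact absurd hf (not_reachable_parent htree hp j)
  · exact .inl (hf.trans (SimpleGraph.deleteEdges_adj.2 ⟨hadj, hedge⟩).reachable)

lemma dist_le_dist_add_one_of_pos {j v : W} (hv : 0 < e j v) :
    (graph e).dist v s ≤ (graph e).dist j s + 1 := by
  rcases eq_or_ne v j with rfl | hvj
  · omega
  have hadj : (graph e).Adj v j := (SimpleGraph.fromRel_adj _ _ _).2 ⟨hvj, .inr hv⟩
  have := hadj.reachable.dist_triangle_left s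
  rwa [SimpleGraph.dist_eq_one_iff_adj.2 hadj, add_comm] at this

end Tree

section Branch

variable {e : V → V → ℕ} {s : V} {p : {i : V // i ≠ s} → V}

/-- The subtree of `j` (the paper's `{i : i ⪰ j}`), seen as the component of `j` once the edge
to its parent is cut. -/
noncomputable def branch (e : V → V → ℕ) (s : V) (p : {i : V // i ≠ s} → V)
    (j : {i : V // i ≠ s}) : Finset {i : V // i ≠ s} := by
  classical
  exact Finset.univ.filter fun i => ((graph e).deleteEdges {s(j.1, p j)}).Reachable j.1 i.1

lemma mem_branch {j i : {i : V // i ≠ s}} :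
    i ∈ branch e s p j ↔ ((graph e).deleteEdges {s(j.1, p j)}).Reachable j.1 i.1 := by
  classical
  simp [branch]

lemma deg_le_sum_branch (htree : (graph e).IsTree) (hp : IsParent e s p)
    {j f : {i : V // i ≠ s}} (hf : f ∈ branch e s p j) :
    deg e f.1 ≤ ∑ i ∈ branch e s p j, e f.1 i.1 + if f = j then e j.1 (p j) else 0 := by
  classical
  set R := ((graph e).deleteEdges {s(j.1, p j)}).Reachable j.1
  have hpt : ∀ v, e f.1 v ≤
      (if R v then e f.1 v else 0) + if f.1 = j.1 ∧ v = p j then e f.1 v else 0 := by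
    intro v
    rcases (e f.1 v).eq_zero_or_pos with h | h
    · simp [h]
    rcases reachable_or_of_pos htree hp (mem_branch.1 hf) h with h | h <;> simp [R, h]
  have hsplit : ∑ v, (if f.1 = j.1 ∧ v = p j then e f.1 v else 0) =
      if f = j then e j.1 (p j) else 0 := by
    by_cases hfj : f = j <;> simp [hfj, Subtype.val_inj]
  calc deg e f.1 ≤ ∑ v, ((if R v then e f.1 v else 0) +
        if f.1 = j.1 ∧ v = p j then e f.1 v else 0) := Finset.sum_le_sum fun v _ => hpt v
    _ = ∑ i ∈ branch e s p j, e f.1 i.1 + if f = j then e j.1 (p j) else 0 := by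
      rw [Finset.sum_add_distrib, hsplit, Fintype.sum_eq_add_sum_subtype_ne _ s,
        if_neg (not_reachable_sink htree hp j), zero_add, ← Finset.sum_filter]
      rfl

theorem le_of_recurrent (hsym : ∀ i j : V, e i j = e j i) (htree : (graph e).IsTree)
    (hp : IsParent e s p) {σ : Conf s → Conf s} (hσ : IsStabilization e s σ) {u : Conf s}
    (hu : Recurrent e s σ u) (j : {i : V // i ≠ s}) : deg e j.1 - e j.1 (p j) ≤ u j := by
  obtain ⟨hstab, hreach⟩ := hu
  obtain ⟨w, hw⟩ := hreach fun i => deg e i.1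
  obtain ⟨f, hfF, hf⟩ := exists_mem_sum_le_of_reflTransGen (hw ▸ (hσ _).2)
    ⟨j, mem_branch.2 .rfl⟩ fun f _ => (hstab f).trans_le (Nat.le_add_right _ _)
  have hdeg := deg_le_sum_branch htree hp hfF
  simp only [hsym _ f.1] at hf
  by_cases hfj : f = j
  · subst hfj
    rw [if_pos rfl] at hdeg
    omega
  · rw [if_neg hfj] at hdeg
    exact absurd (hstab f) (by omega)

end Branch

section Laplacian

variable {W : Type*} [Fintype W] {e : W → W → ℕ} {s : W} {p : {i : W // i ≠ s} → W}

/-- Firing every vertex `v` exactly `k v` times, with `k s = 0`, turns `u` into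
`u - laplacian e k` on the ordinary vertices. -/
def laplacian (e : W → W → ℕ) (φ : W → ℤ) (j : W) : ℤ := ∑ v, (φ j - φ v) * e j v

lemma laplacian_add (φ ψ : W → ℤ) (j : W) :
    laplacian e (φ + ψ) j = laplacian e φ j + laplacian e ψ j := by
  simp only [laplacian, Pi.add_apply, ← Finset.sum_add_distrib]
  exact Finset.sum_congr rfl fun _ _ => by ring

lemma laplacian_ge {φ : W → ℤ} {j w : W} {a b : ℤ}
    (hnbr : ∀ v, 0 < e j v → φ v ≤ φ j + a) (hw : φ w + b ≤ φ j) :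
    (a + b) * e j w - a * deg e j ≤ laplacian e φ j := by
  classical
  have key : ∀ v ∈ Finset.univ,
      -a * e j v + (if v = w then (a + b) * e j w else 0) ≤ (φ j - φ v) * e j v := by
    intro v _
    split_ifs with hv
    · subst hv
      nlinarith [(e j v).cast_nonneg (α := ℤ)]
    · rcases (e j v).eq_zero_or_pos with h | h
      · simp [h]
      · nlinarith [hnbr v h]
  calc (a + b) * e j w - a * deg e j
      = ∑ v, (-a * e j v + if v = w then (a + b) * e j w else 0) := by
        simp [Finset.sum_add_distrib, ← Finset.mul_sum, deg]
        ring
    _ ≤ laplacian e φ j := Finset.sum_le_sum key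

/-- The witness is a function of the distance to the sink whose increments `M ^ (N - d)` decay so
fast that the gain over the parent edge outweighs the losses over all other edges. -/
lemma exists_le_laplacian (hsym : ∀ i j : W, e i j = e j i) (hp : IsParent e s p) (T : ℕ) :
    ∃ k : W → ℕ, k s = 0 ∧
      ∀ j : {i : W // i ≠ s}, (T : ℤ) ≤ laplacian e (fun v => k v) j := by
  set d : W → ℕ := fun v => (graph e).dist v s
  set N := ∑ v, d v
  set D := ∑ v, deg e v
  set M := T + D + 1
  set f : ℕ → ℕ := fun n => ∑ m ∈ Finset.range n, M ^ (N - m)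
  have hf_succ : ∀ n, f (n + 1) = f n + M ^ (N - n) := fun n => Finset.sum_range_succ _ n
  refine ⟨fun v => f (d v), by simp [d, f], fun j => ?_⟩
  have hpar : d (p j) + 1 = d j := (hp j).2
  have hnbr : ∀ v, 0 < e j v → (f (d v) : ℤ) ≤ f (d j) + (M ^ (N - d j) : ℕ) := by
    intro v hv
    exact_mod_cast (Finset.sum_le_sum_of_subset
      (Finset.range_mono (dist_le_dist_add_one_of_pos hv))).trans (hf_succ _).le
  have hw : (f (d (p j)) : ℤ) + (M ^ (N - d (p j)) : ℕ) ≤ f (d j) := by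
    rw [← hpar, hf_succ]
    push_cast
    rfl
  refine le_trans ?_ (laplacian_ge hnbr hw)
  have hpow : M ^ (N - d (p j)) = M * M ^ (N - d j) := by
    have : d j ≤ N := Finset.single_le_sum (by simp) (Finset.mem_univ _)
    rw [← pow_succ']
    congr 1
    omega
  have ha : (1 : ℤ) ≤ (M ^ (N - d j) : ℕ) := by exact_mod_cast Nat.one_le_pow _ _ (by omega)
  have he : (1 : ℤ) ≤ e j (p j) := by exact_mod_cast hp.edge_pos hsym j
  have hdeg : (deg e j : ℤ) ≤ D := by
    exact_mod_cast Finset.single_le_sum (by simp) (Finset.mem_univ _)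
  rw [hpow]
  generalize (M ^ (N - d j) : ℕ) = a at ha ⊢
  push_cast [M]
  nlinarith [mul_le_mul_of_nonneg_left hdeg (by positivity : (0 : ℤ) ≤ a),
    mul_le_mul_of_nonneg_left he (by positivity : (0 : ℤ) ≤ a * (T + D + 2))]

lemma exists_max_parent_lt (hp : IsParent e s p) {k : W → ℕ} (hks : k s = 0)
    (hk : ∃ v, k v ≠ 0) :
    ∃ j : {i : W // i ≠ s}, (∀ v, k v ≤ k j) ∧ k (p j) < k j := by
  obtain ⟨m, -, hm⟩ := Finset.exists_max_image Finset.univ k ⟨s, Finset.mem_univ s⟩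
  obtain ⟨j, hj, hjmin⟩ := Finset.exists_min_image (Finset.univ.filter fun v => k v = k m)
    (fun v => (graph e).dist v s) ⟨m, by simp⟩
  rw [Finset.mem_filter] at hj
  have hmax : ∀ v, k v ≤ k j := fun v => hj.2 ▸ hm v (Finset.mem_univ v)
  have hjs : j ≠ s := by
    rintro rfl
    obtain ⟨v, hv⟩ := hk
    have := hmax v
    omega
  refine ⟨⟨j, hjs⟩, hmax, lt_of_le_of_ne (hmax _) fun h => ?_⟩
  have := hjmin (p ⟨j, hjs⟩) (by simp [h, hj.2])
  have := (hp ⟨j, hjs⟩).2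
  dsimp only at this
  omega

end Laplacian

section Recurrence

variable {e : V → V → ℕ} {s : V} {p : {i : V // i ≠ s} → V}

lemma toppleAt_cast (hsym : ∀ i j : V, e i j = e j i) {i : {i : V // i ≠ s}} {u : Conf s}
    (hi : deg e i.1 ≤ u i) (m : {i : V // i ≠ s}) :
    (toppleAt e s i u m : ℤ) = u m - laplacian e (Pi.single i.1 1) m.1 := by
  by_cases hmi : m = i
  · subst hmi
    have hdeg : ∑ v, (e m.1 v : ℤ) = deg e m.1 := by simp [deg]
    simp [laplacian, Pi.single_apply, sub_mul, Finset.sum_sub_distrib, hdeg]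
    omega
  · have hne : m.1 ≠ i.1 := fun h => hmi (Subtype.ext h)
    simp [laplacian, Pi.single_apply, hmi, hne, hsym i.1 m.1]

/-- A vertex of maximal `k` closest to the sink loses at least its parent edge in
`laplacian e k`, so it is unstable in `x` and may fire first. -/
theorem reflTransGen_of_laplacian (hsym : ∀ i j : V, e i j = e j i) (hp : IsParent e s p)
    {u : Conf s} (hu : ∀ j, deg e j.1 ≤ u j + e j.1 (p j)) (k : V → ℕ) (hks : k s = 0)
    (x : Conf s)
    (hx : ∀ j : {i : V // i ≠ s}, (x j : ℤ) = u j + laplacian e (fun v => k v) j) :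
    Relation.ReflTransGen (Topple e s) x u := by
  induction hn : ∑ v, k v using Nat.strong_induction_on generalizing k x with
  | _ n ih =>
  by_cases hk : ∀ v, k v = 0
  · obtain rfl : x = u := funext fun j => by simpa [laplacian, hk] using hx j
    exact .refl
  push Not at hk
  obtain ⟨j, hmax, hpar⟩ := exists_max_parent_lt hp hks hk
  have hlap : (e j.1 (p j) : ℤ) ≤ laplacian e (fun v => k v) j := by
    simpa using laplacian_ge (a := 0) (b := 1) (fun v _ => by simpa using hmax v)
      (by simpa [Int.add_one_le_iff] using hpar)
  have hxj : deg e j.1 ≤ x j := by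
    have := hx j
    have := hu j
    omega
  set k' := Function.update k j.1 (k j - 1)
  have hkk' : (fun v => (k v : ℤ)) = (fun v => (k' v : ℤ)) + Pi.single j.1 1 := by
    funext v
    by_cases hv : v = j.1
    · subst hv; simp [k']; omega
    · simp [k', hv]
  have hsum : ∑ v, k' v + 1 = n := by
    rw [← hn, Finset.sum_update_of_mem (Finset.mem_univ _), Finset.sdiff_singleton_eq_erase,
      ← Finset.add_sum_erase _ k (Finset.mem_univ j.1)]
    omega
  refine .head ⟨j, hxj, rfl⟩ (ih _ (by omega) k' ?_ _ ?_ rfl)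
  · simp [k', hks, Ne.symm j.2]
  · intro m
    rw [toppleAt_cast hsym hxj, hx, hkk', laplacian_add]
    ring

theorem recurrent_of_le (hsym : ∀ i j : V, e i j = e j i) (hp : IsParent e s p)
    {σ : Conf s → Conf s} (hσ : IsStabilization e s σ) {u : Conf s}
    (hu : ∀ j : {i : V // i ≠ s}, deg e j.1 - e j.1 (p j) ≤ u j ∧ u j < deg e j.1) :
    Recurrent e s σ u := by
  refine ⟨fun j => (hu j).2, fun v => ?_⟩
  obtain ⟨k, hks, hk⟩ := exists_le_laplacian hsym hp (∑ j, v j)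
  let w : Conf s := fun j => u j + (laplacian e (fun i => k i) j - v j).toNat
  have hvw : ∀ j, ((v + w) j : ℤ) = u j + laplacian e (fun i => k i) j := by
    intro j
    have : (v j : ℤ) ≤ ∑ j, v j := by
      exact_mod_cast Finset.single_le_sum (by simp) (Finset.mem_univ j)
    have := hk j
    simp [w]
    omega
  have hreach := reflTransGen_of_laplacian hsym hp (fun j => by have := hu j; omega) k hks _ hvw
  exact ⟨w, eq_of_reflTransGen_of_stable (hσ _).2 hreach (hσ _).1 fun j => (hu j).2⟩

end Recurrence

theorem stmt_4 (e : V → V → ℕ) (s : V) (hsym : ∀ i j : V, e i j = e j i)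
    (htree : (graph e).IsTree)
    (p : {i : V // i ≠ s} → V) (hp : IsParent e s p)
    (σ : Conf s → Conf s) (hσ : IsStabilization e s σ) (u : Conf s) :
    Recurrent e s σ u ↔
      ∀ j : {i : V // i ≠ s}, deg e j.1 - e j.1 (p j) ≤ u j ∧ u j < deg e j.1 :=
  ⟨fun hu j => ⟨le_of_recurrent hsym htree hp hσ hu j, hu.1 j⟩,
    recurrent_of_le hsym hp hσ⟩

end SandpilePaper
end
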